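/- arXiv:1004.4949 — 5 statements merged into one kernel-verified Lean document; each statement's English description precedes it below -/
import Mathlib

section
/- Let m be a positive integer, F = GF(2^m), let r ≥ 0, and let a₀, a₁, ..., a_r ∈ F be not all zero. Then the set of x ∈ F such that Tr(a₀·x·y + Σ_{t=1}^r a_t·(x·y^{2^t} + x^{2^t}·y)) = 0 for all y ∈ F has at most 2^{2r} elements; since this set is the F₂-kernel of the matrix Σ_{t=0}^r P^t(a_t), every nonzero matrix in the Delsarte–Goethals set DG(m,r) has rank at least m − 2r over F₂. -/
noncomputable section

namespace DGPaper

/-- The absolute trace `GF(2^m) → 𝔽₂`. -/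
def tr {m : ℕ} (x : GaloisField 2 m) : ZMod 2 :=
  Algebra.trace (ZMod 2) (GaloisField 2 m) x

/-- Lift a bit to `ℤ₄`. -/
def lift2 (v : ZMod 2) : ZMod 4 := (v.val : ZMod 4)

/-- `i^v` for `v ∈ ℤ₄`. -/
def zeta (v : ZMod 4) : ℂ := Complex.I ^ v.val

/-- The field element of `GF(2^m)` associated to a binary `m`-tuple via the basis
`1, ξ, …, ξ^{m-1}`. -/
def fld {m : ℕ} (ξ : GaloisField 2 m) (x : Fin m → ZMod 2) : GaloisField 2 m :=
  ∑ j : Fin m, x j • ξ ^ (j : ℕ)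

/-- The binary symmetric matrix `P^t(a)`: for `t = 0` it represents the bilinear form
`(x,y) ↦ Tr(x y a)`, and for `t ≥ 1` the (zero-diagonal) form
`(x,y) ↦ Tr((x y^{2^t} + x^{2^t} y) a)`, in the basis `1, ξ, …, ξ^{m-1}` of `GF(2^m)`
over `𝔽₂`. -/
def Pmat {m : ℕ} (ξ : GaloisField 2 m) (t : ℕ) (a : GaloisField 2 m) :
    Matrix (Fin m) (Fin m) (ZMod 2) :=
  Matrix.of fun i j =>
    if t = 0 then tr (ξ ^ (i : ℕ) * ξ ^ (j : ℕ) * a)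
    else tr ((ξ ^ (i : ℕ) * (ξ ^ (j : ℕ)) ^ (2 ^ t) + (ξ ^ (i : ℕ)) ^ (2 ^ t) * ξ ^ (j : ℕ)) * a)

/-- The quadratic form `x P xᵀ` evaluated in `ℤ₄` (the `0/1` entries of `P` and `x`
being lifted to `ℤ₄`). -/
def qform {m : ℕ} (P : Matrix (Fin m) (Fin m) (ZMod 2)) (x : Fin m → ZMod 2) : ZMod 4 :=
  ∑ i : Fin m, ∑ j : Fin m, lift2 (x i) * lift2 (P i j) * lift2 (x j)

instance {m : ℕ} : Fintype (GaloisField 2 m) := Fintype.ofFinite _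

end DGPaper

/-!
Since `Tr (z ^ 2) = Tr z`, the inverse Frobenius `φ⁻¹` satisfies
`Tr (a x y ^ (2 ^ t)) = Tr (φ⁻ᵗ (a x) y)`, so the form `B` (`dgForm`) satisfies
`Tr (B(x, y)) = Tr (ℓ(x) y)` for the additive map (`dgAdjoint`)
`ℓ(x) = ∑ₜ aₜ x ^ (2 ^ t) + ∑_{t > 0} φ⁻ᵗ (aₜ x)`, and nondegeneracy of the trace form makes the
radical of `B` the zero set of `ℓ`. Raising to the power `2 ^ r` clears the inverse Frobenius:
`ℓ(x) ^ (2 ^ r)` is a polynomial in `x` of degree at most `2 ^ (2 r)`, nonzero because its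
coefficient at `X ^ (2 ^ (r + t))` is `aₜ ^ (2 ^ r)`. In the basis `1, ξ, …, ξ ^ (m - 1)` the kernel
of `∑ₜ Pᵗ(aₜ)` is this radical, and rank–nullity gives the rank bound.
-/

open Polynomial

section Trace

variable (K : Type*) {L : Type*} [Field K] [Field L] [Algebra K L]

theorem trace_pow_card_pow [Fintype K] [Algebra.IsAlgebraic K L] (x : L) (n : ℕ) :
    Algebra.trace K L (x ^ Fintype.card K ^ n) = Algebra.trace K L x := by
  have hφ := congrFun (FiniteField.coe_frobeniusAlgEquivOfAlgebraic_iterate K L n) x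
  rw [← AlgEquiv.coe_pow] at hφ
  rw [← hφ, Algebra.trace_eq_of_algEquiv]

variable [FiniteDimensional K L] [Algebra.IsSeparable K L]

theorem eq_zero_of_forall_trace_mul_eq_zero {c : L} (h : ∀ y, Algebra.trace K L (c * y) = 0) :
    c = 0 :=
  (traceForm_nondegenerate K L).1 c h

theorem eq_zero_of_forall_trace_mul_basis_eq_zero {ι : Type*} (b : Module.Basis ι K L) {c : L}
    (h : ∀ i, Algebra.trace K L (c * b i) = 0) : c = 0 := by
  have hc : Algebra.traceForm K L c = 0 := b.ext h
  exact eq_zero_of_forall_trace_mul_eq_zero K fun y => LinearMap.congr_fun hc y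

end Trace

theorem trace_iterateFrobeniusEquiv_symm_mul {p : ℕ} [Fact p.Prime] {L : Type*} [Field L] [Finite L]
    [Algebra (ZMod p) L] [CharP L p] (z y : L) (n : ℕ) :
    Algebra.trace (ZMod p) L ((iterateFrobeniusEquiv L p n).symm z * y) =
      Algebra.trace (ZMod p) L (z * y ^ p ^ n) := by
  rw [← trace_pow_card_pow, ZMod.card, mul_pow, ← iterateFrobeniusEquiv_def,
    RingEquiv.apply_symm_apply]

theorem iterateFrobeniusEquiv_symm_pow {p : ℕ} {L : Type*} [CommSemiring L] [ExpChar L p]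
    [PerfectRing L p] (z : L) (n k : ℕ) :
    (iterateFrobeniusEquiv L p n).symm z ^ p ^ (n + k) = z ^ p ^ k := by
  rw [pow_add, pow_mul, ← iterateFrobeniusEquiv_def L p n, RingEquiv.apply_symm_apply]

theorem Fin.sum_univ_eq_add_sum_Ioi_zero {M : Type*} [AddCommMonoid M] {n : ℕ}
    (f : Fin (n + 1) → M) : ∑ i, f i = f 0 + ∑ i ∈ Finset.Ioi 0, f i := by
  rw [Fin.sum_univ_succ, Fin.sum_Ioi_zero]

theorem Matrix.card_sub_le_rank_of_card_ker_le {K : Type*} [Field K] [Fintype K] {m n : Type*}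
    [Fintype n] (M : Matrix m n K) {k : ℕ}
    (h : Nat.card (LinearMap.ker M.mulVecLin) ≤ Fintype.card K ^ k) :
    Fintype.card n - k ≤ M.rank := by
  have hker : Module.finrank K (LinearMap.ker M.mulVecLin) ≤ k := by
    have := Fintype.ofFinite (LinearMap.ker M.mulVecLin)
    rw [Nat.card_eq_fintype_card, Module.card_eq_pow_finrank (K := K)] at h
    exact (Nat.pow_le_pow_iff_right Fintype.one_lt_card).mp h
  have := LinearMap.finrank_range_add_finrank_ker M.mulVecLin
  rw [Module.finrank_fintype_fun_eq_card] at this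
  rw [Matrix.rank]
  omega

namespace DGPaper

section Form

variable (p : ℕ) {L : Type*} [CommSemiring L] {r : ℕ}

def dgForm (a : Fin (r + 1) → L) (x y : L) : L :=
  a 0 * x * y +
    ∑ t ∈ Finset.Ioi (0 : Fin (r + 1)), a t * (x * y ^ p ^ (t : ℕ) + x ^ p ^ (t : ℕ) * y)

theorem dgForm_comm (a : Fin (r + 1) → L) (x y : L) : dgForm p a x y = dgForm p a y x := by
  unfold dgForm
  congr 1
  · ring
  · exact Finset.sum_congr rfl fun t _ => by ring

def dgPoly (a : Fin (r + 1) → L) : L[X] :=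
  ∑ t, C (a t ^ p ^ r) * X ^ p ^ (r + t) +
    ∑ t ∈ Finset.Ioi (0 : Fin (r + 1)), C (a t ^ p ^ (r - t)) * X ^ p ^ (r - t)

variable [ExpChar L p] [PerfectRing L p]

def dgAdjoint (a : Fin (r + 1) → L) (x : L) : L :=
  ∑ t, a t * x ^ p ^ (t : ℕ) +
    ∑ t ∈ Finset.Ioi (0 : Fin (r + 1)), (iterateFrobeniusEquiv L p t).symm (a t * x)

theorem dgAdjoint_pow_eq_eval (a : Fin (r + 1) → L) (x : L) :
    dgAdjoint p a x ^ p ^ r = (dgPoly p a).eval x := by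
  simp only [dgAdjoint, dgPoly, add_pow_expChar_pow, sum_pow_char_pow, eval_add, eval_finsetSum,
    eval_mul, eval_C, eval_pow, eval_X]
  congr 1
  · refine Finset.sum_congr rfl fun t _ => ?_
    rw [mul_pow, ← pow_mul, ← pow_add, add_comm]
  · refine Finset.sum_congr rfl fun t _ => ?_
    have hr : p ^ r = p ^ ((t : ℕ) + (r - t)) := by rw [Nat.add_sub_cancel' t.is_le]
    rw [hr, iterateFrobeniusEquiv_symm_pow, mul_pow]

end Form

section Roots

variable {p : ℕ} [Fact p.Prime] {L : Type*} {r : ℕ}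

theorem dgPoly_coeff [CommSemiring L] (a : Fin (r + 1) → L) (s : Fin (r + 1)) :
    (dgPoly p a).coeff (p ^ (r + s)) = a s ^ p ^ r := by
  have hp : 1 < p := Fact.out (p := p.Prime) |>.one_lt
  simp only [dgPoly, coeff_add, finsetSum_coeff, coeff_C_mul_X_pow, Nat.pow_right_inj hp,
    Nat.add_left_cancel_iff, Fin.val_inj, Finset.sum_ite_eq, Finset.mem_univ, if_true]
  rw [Finset.sum_eq_zero, add_zero]
  intro t ht
  simp only [Finset.mem_Ioi, Fin.lt_def, Fin.val_zero] at ht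
  rw [if_neg (by omega)]

theorem natDegree_dgPoly_le [CommSemiring L] (a : Fin (r + 1) → L) :
    (dgPoly p a).natDegree ≤ p ^ (2 * r) := by
  have hp : 0 < p := Fact.out (p := p.Prime) |>.pos
  have hmono : ∀ (c : L) {k : ℕ}, k ≤ 2 * r → (C c * X ^ p ^ k).natDegree ≤ p ^ (2 * r) :=
    fun c k hk => (natDegree_C_mul_X_pow_le c _).trans (Nat.pow_le_pow_right hp hk)
  refine natDegree_add_le_of_degree_le (natDegree_sum_le_of_forall_le _ _ fun t _ => ?_)
    (natDegree_sum_le_of_forall_le _ _ fun t _ => ?_) <;>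
  exact hmono _ (by omega)

theorem ncard_setOf_dgAdjoint_eq_zero_le [Field L] [ExpChar L p] [PerfectRing L p]
    {a : Fin (r + 1) → L} (ha : a ≠ 0) : {x | dgAdjoint p a x = 0}.ncard ≤ p ^ (2 * r) := by
  obtain ⟨s, hs⟩ := Function.ne_iff.mp ha
  have hP : dgPoly p a ≠ 0 := fun h =>
    pow_ne_zero (p ^ r) hs (by rw [← dgPoly_coeff, h, coeff_zero])
  have hsub : {x | dgAdjoint p a x = 0} ⊆ (dgPoly p a).rootSet L := fun x hx => by
    rw [mem_rootSet_of_ne hP, coe_aeval_eq_eval, ← dgAdjoint_pow_eq_eval, Set.mem_ofPred.mp hx,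
      zero_pow (pow_ne_zero _ (Fact.out (p := p.Prime)).ne_zero)]
  calc _ ≤ ((dgPoly p a).rootSet L).ncard := Set.ncard_le_ncard hsub (rootSet_finite _ _)
    _ ≤ (dgPoly p a).natDegree := ncard_rootSet_le _ _
    _ ≤ p ^ (2 * r) := natDegree_dgPoly_le a

end Roots

section Radical

variable {p : ℕ} [Fact p.Prime] {L : Type*} [Field L] [Finite L] [Algebra (ZMod p) L] [CharP L p]
  {r : ℕ}

theorem trace_dgForm (a : Fin (r + 1) → L) (x y : L) :
    Algebra.trace (ZMod p) L (dgForm p a x y) = Algebra.trace (ZMod p) L (dgAdjoint p a x * y) := by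
  simp only [dgForm, dgAdjoint, add_mul, Finset.sum_mul, Fin.sum_univ_eq_add_sum_Ioi_zero, map_add,
    map_sum, trace_iterateFrobeniusEquiv_symm_mul, mul_add, Finset.sum_add_distrib]
  simp only [Fin.val_zero, pow_zero, pow_one, mul_assoc]
  abel

theorem dgAdjoint_eq_zero_of_forall_trace_dgForm_eq_zero {a : Fin (r + 1) → L} {x : L}
    (h : ∀ y, Algebra.trace (ZMod p) L (dgForm p a x y) = 0) : dgAdjoint p a x = 0 :=
  eq_zero_of_forall_trace_mul_eq_zero (ZMod p) fun y => trace_dgForm a x y ▸ h y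

theorem ncard_dgForm_radical_le {a : Fin (r + 1) → L} (ha : a ≠ 0) :
    {x | ∀ y, Algebra.trace (ZMod p) L (dgForm p a x y) = 0}.ncard ≤ p ^ (2 * r) :=
  (Set.ncard_le_ncard (fun _ => dgAdjoint_eq_zero_of_forall_trace_dgForm_eq_zero)
    (Set.toFinite _)).trans (ncard_setOf_dgAdjoint_eq_zero_le ha)

end Radical

section DelsarteGoethals

variable {m r : ℕ} (ξ : GaloisField 2 m) (a : Fin (r + 1) → GaloisField 2 m)

theorem sum_Pmat_apply (i j : Fin m) :
    (∑ t : Fin (r + 1), Pmat ξ t (a t)) i j = tr (dgForm 2 a (ξ ^ (i : ℕ)) (ξ ^ (j : ℕ))) := by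
  rw [Matrix.sum_apply, Fin.sum_univ_eq_add_sum_Ioi_zero, dgForm, tr, map_add, map_sum]
  congr 1
  · simp only [Pmat, Matrix.of_apply, Fin.val_zero, if_true, tr]
    ring_nf
  · refine Finset.sum_congr rfl fun t ht => ?_
    simp only [Finset.mem_Ioi, Fin.lt_def, Fin.val_zero] at ht
    simp only [Pmat, Matrix.of_apply, if_neg ht.ne', tr]
    ring_nf

theorem sum_Pmat_mulVec_apply (v : Fin m → ZMod 2) (i : Fin m) :
    (∑ t : Fin (r + 1), Pmat ξ t (a t)).mulVec v i = tr (dgForm 2 a (fld ξ v) (ξ ^ (i : ℕ))) := by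
  rw [dgForm_comm, tr, trace_dgForm, fld, Finset.mul_sum, map_sum, Matrix.mulVec, dotProduct]
  refine Finset.sum_congr rfl fun j _ => ?_
  rw [sum_Pmat_apply, tr, trace_dgForm, mul_smul_comm, map_smul, smul_eq_mul, mul_comm]

theorem dgAdjoint_fld_eq_zero_of_mem_ker (b : Module.Basis (Fin m) (ZMod 2) (GaloisField 2 m))
    (hb : ∀ j, b j = ξ ^ (j : ℕ)) {v : Fin m → ZMod 2}
    (hv : v ∈ LinearMap.ker (∑ t : Fin (r + 1), Pmat ξ t (a t)).mulVecLin) :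
    dgAdjoint 2 a (fld ξ v) = 0 := by
  refine eq_zero_of_forall_trace_mul_basis_eq_zero (ZMod 2) b fun i => ?_
  rw [hb, ← trace_dgForm, ← tr, ← sum_Pmat_mulVec_apply, ← Matrix.mulVecLin_apply, hv]
  rfl

end DelsarteGoethals

/-- For `F = GF(2^m)` and `a₀, …, a_r ∈ F` not all zero, the radical
`{x ∈ F : Tr(a₀ x y + ∑_{t=1}^r a_t (x y^{2^t} + x^{2^t} y)) = 0 for all y}` has at most
`2^{2r}` elements; since this set is the `𝔽₂`-kernel of the matrix `∑_{t=0}^r P^t(a_t)`,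
every nonzero matrix in the Delsarte–Goethals set `DG(m, r)` has rank at least `m - 2r`
over `𝔽₂`. -/
theorem delsarteGoethals_matrix_rank_ge
    (m r : ℕ) (hm : 0 < m)
    (ξ : GaloisField 2 m)
    (hξ : LinearIndependent (ZMod 2) fun j : Fin m => ξ ^ (j : ℕ))
    (a : Fin (r + 1) → GaloisField 2 m) (ha : a ≠ 0) :
    {x : GaloisField 2 m |
        ∀ y : GaloisField 2 m,
          tr (a 0 * x * y +
              ∑ t ∈ Finset.Ioi (0 : Fin (r + 1)),
                a t * (x * y ^ 2 ^ (t : ℕ) + x ^ 2 ^ (t : ℕ) * y)) = 0}.ncard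
        ≤ 2 ^ (2 * r) ∧
      ((∑ t : Fin (r + 1), Pmat ξ (t : ℕ) (a t)) ≠ 0 →
        m - 2 * r ≤ (∑ t : Fin (r + 1), Pmat ξ (t : ℕ) (a t)).rank) := by
  refine ⟨ncard_dgForm_radical_le ha, fun _ => ?_⟩
  set M := ∑ t : Fin (r + 1), Pmat ξ t (a t)
  have : Nonempty (Fin m) := Fin.pos_iff_nonempty.mp hm
  let b := basisOfLinearIndependentOfCardEqFinrank hξ
    (by rw [Fintype.card_fin, GaloisField.finrank 2 hm.ne'])
  have hb : ∀ j, b j = ξ ^ (j : ℕ) := fun j => by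
    rw [coe_basisOfLinearIndependentOfCardEqFinrank]
  have hker : Nat.card (LinearMap.ker M.mulVecLin) ≤ 2 ^ (2 * r) :=
    calc Nat.card (LinearMap.ker M.mulVecLin)
        _ = (LinearMap.ker M.mulVecLin : Set (Fin m → ZMod 2)).ncard := Nat.card_coe_set_eq _
        _ ≤ {x | dgAdjoint 2 a x = 0}.ncard :=
          Set.ncard_le_ncard_of_injOn (fld ξ) (fun _ => dgAdjoint_fld_eq_zero_of_mem_ker ξ a b hb)
            hξ.fintypeLinearCombination_injective.injOn
        _ ≤ 2 ^ (2 * r) := ncard_setOf_dgAdjoint_eq_zero_le ha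
  simpa using Matrix.card_sub_le_rank_of_card_ker_le M hker
end DGPaper
end
end

section
/- Let m be an odd positive integer, F = GF(2^m), and r = (m−1)/2. Then the map (a₀, a₁, ..., a_r) ↦ Σ_{t=0}^r P^t(a_t) is a bijection from F^{(m+1)/2} onto the set of all m×m binary symmetric matrices; in particular every symmetric F₂-bilinear form on F₂^m is represented by exactly one matrix in DG(m,(m−1)/2). -/
/-!
For `c = (c_0, …, c_r)` put `L_c(y) = Σ_t (c_t y^{2^t} + (c_t y)^{2^{m-t}})`, the second term
omitted for `t = 0`. Since the trace is Frobenius-invariant,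
`Tr(x^{2^t} y a) = Tr(x (y a)^{2^{m-t}})`, so `x (Σ_t P^t(c_t)) yᵀ = Tr(x L_c(y))`. If this matrix
vanishes, nondegeneracy of the trace form gives `L_c = 0` on a basis, hence everywhere as `L_c`
is additive. Being a polynomial of degree at most `2^{m-1} < |F|`, `L_c` is then the zero
polynomial; its exponents `2^t` (`t ≤ r`) and `2^{m-t}` (`1 ≤ t ≤ r`) are pairwise distinct
because `2r < m`, so every `c_t` is zero. The map is additive, hence injective, and it is onto
the symmetric matrices because both sets have `2^{m(m+1)/2}` elements.
-/

noncomputable section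

namespace DGPaper

open Polynomial

section FiniteFieldTrace

variable {K L : Type*} [Field K] [Fintype K] [Field L] [Fintype L] [Algebra K L]

theorem trace_pow_card_pow (k : ℕ) (x : L) :
    Algebra.trace K L (x ^ Fintype.card K ^ k) = Algebra.trace K L x := by
  have := Algebra.trace_eq_of_algEquiv (FiniteField.frobeniusAlgEquivOfAlgebraic K L ^ k) x
  rwa [AlgEquiv.coe_pow, FiniteField.coe_frobeniusAlgEquivOfAlgebraic_iterate] at this

theorem trace_pow_card_pow_mul {s : ℕ} (hs : s ≤ Module.finrank K L) (x y : L) :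
    Algebra.trace K L (x ^ Fintype.card K ^ s * y) =
      Algebra.trace K L (x * y ^ Fintype.card K ^ (Module.finrank K L - s)) := by
  rw [← trace_pow_card_pow (Module.finrank K L - s) (x ^ _ * y), mul_pow, ← pow_mul, ← pow_add,
    Nat.add_sub_cancel' hs, ← Module.card_eq_pow_finrank, FiniteField.pow_card]

theorem eq_zero_of_forall_trace_basis_mul_eq_zero {ι : Type*} (b : Module.Basis ι K L) {w : L}
    (h : ∀ i, Algebra.trace K L (b i * w) = 0) : w = 0 := by
  have hw : Algebra.traceForm K L w = 0 :=
    b.ext fun i => by rw [Algebra.traceForm_apply, mul_comm, h, LinearMap.zero_apply]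
  exact (traceForm_nondegenerate K L).1 w fun y => by rw [hw, LinearMap.zero_apply]

end FiniteFieldTrace

theorem eq_zero_of_map_add_of_basis {n : ℕ} {ι M N : Type*} [AddCommGroup M] [AddCommGroup N]
    [Module (ZMod n) M] [Module (ZMod n) N] (b : Module.Basis ι (ZMod n) M) {f : M → N}
    (hadd : ∀ x y, f (x + y) = f x + f y) (hb : ∀ i, f (b i) = 0) : f = 0 :=
  congrArg DFunLike.coe (b.ext (f₁ := (AddMonoidHom.mk' f hadd).toZModLinearMap n) (f₂ := 0) hb)

theorem card_isSymm {n α : Type*} [Fintype n] :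
    Nat.card {A : Matrix n n α // A.IsSymm} = Nat.card α ^ (Fintype.card n + 1).choose 2 := by
  let e : {A : Matrix n n α // A.IsSymm} ≃ (Sym2 n → α) :=
    (Equiv.subtypeEquiv Matrix.of.symm fun A => by
      rw [Matrix.IsSymm.ext_iff, forall_comm]; rfl).trans Sym2.lift
  rw [Nat.card_congr e, Nat.card_fun, Nat.card_eq_fintype_card (α := Sym2 n), Sym2.card]

variable {m : ℕ}

theorem tr_pow_two_pow_mul {s : ℕ} (hs : s ≤ m) (x y : GaloisField 2 m) :
    tr (x ^ 2 ^ s * y) = tr (x * y ^ 2 ^ (m - s)) := by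
  obtain rfl | hm := eq_or_ne m 0
  · obtain rfl : s = 0 := by omega
    simp
  have hrank := GaloisField.finrank 2 hm
  have := trace_pow_card_pow_mul (K := ZMod 2) (s := s) (by omega) x y
  rwa [ZMod.card, hrank] at this

def linearizedPoly (m t : ℕ) (a : GaloisField 2 m) : (GaloisField 2 m)[X] :=
  C a * X ^ 2 ^ t + if t = 0 then 0 else C (a ^ 2 ^ (m - t)) * X ^ 2 ^ (m - t)

theorem Pmat_apply {t : ℕ} (ht : t ≤ m) (ξ a : GaloisField 2 m) (i j : Fin m) :
    Pmat ξ t a i j = tr (ξ ^ (i : ℕ) * (linearizedPoly m t a).eval (ξ ^ (j : ℕ))) := by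
  by_cases ht0 : t = 0
  · subst ht0
    simp only [Pmat, linearizedPoly, Matrix.of_apply, if_true, eval_add, eval_C_mul, eval_pow,
      eval_X, eval_zero]
    exact congrArg tr (by ring)
  · have hfrob := tr_pow_two_pow_mul ht (ξ ^ (i : ℕ)) (ξ ^ (j : ℕ) * a)
    simp only [Pmat, linearizedPoly, Matrix.of_apply, if_neg ht0, eval_add, eval_C_mul, eval_pow,
      eval_X]
    rw [mul_pow] at hfrob
    unfold tr at hfrob ⊢
    rw [add_mul, mul_add, map_add, map_add, mul_assoc ((ξ ^ (i : ℕ)) ^ 2 ^ t), hfrob]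
    ring_nf

theorem eval_linearizedPoly_add (t : ℕ) (a y z : GaloisField 2 m) :
    (linearizedPoly m t a).eval (y + z) =
      (linearizedPoly m t a).eval y + (linearizedPoly m t a).eval z := by
  simp only [linearizedPoly, eval_add, eval_C_mul, eval_pow, eval_X, add_pow_char_pow]
  split_ifs <;> simp only [eval_zero, eval_C_mul, eval_pow, eval_X, add_pow_char_pow] <;> ring

theorem natDegree_linearizedPoly_le {t : ℕ} (ht : t < m) (a : GaloisField 2 m) :
    (linearizedPoly m t a).natDegree ≤ 2 ^ (m - 1) := by
  have hmono : ∀ {e} (b : GaloisField 2 m), e ≤ m - 1 →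
      (C b * X ^ 2 ^ e).natDegree ≤ 2 ^ (m - 1) :=
    fun b he => (natDegree_C_mul_le _ _).trans <| by
      rw [natDegree_X_pow]; exact Nat.pow_le_pow_right two_pos he
  refine (natDegree_add_le _ _).trans (max_le (hmono _ (by omega)) ?_)
  split_ifs with ht0
  · simp
  · exact hmono _ (by omega)

theorem coeff_linearizedPoly_two_pow {n s t : ℕ} (hn : 2 * n ≤ m + 1) (hs : s < n) (ht : t < n)
    (a : GaloisField 2 m) : (linearizedPoly m t a).coeff (2 ^ s) = if s = t then a else 0 := by
  have hinj := Nat.pow_right_injective (le_refl 2)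
  have hsecond :
      (if t = 0 then 0 else C (a ^ 2 ^ (m - t)) * X ^ 2 ^ (m - t)).coeff (2 ^ s) = 0 := by
    split_ifs with ht0
    · exact coeff_zero _
    · rw [coeff_C_mul_X_pow, if_neg fun he => by have := hinj he; omega]
  rw [linearizedPoly, coeff_add, hsecond, add_zero, coeff_C_mul_X_pow]
  exact if_congr hinj.eq_iff rfl rfl

theorem eq_zero_of_sum_Pmat_eq_zero {n : ℕ} (hn : 2 * n ≤ m + 1) {ξ : GaloisField 2 m}
    (hξ : LinearIndependent (ZMod 2) fun j : Fin m => ξ ^ (j : ℕ)) {c : Fin n → GaloisField 2 m}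
    (h : ∑ t : Fin n, Pmat ξ t (c t) = 0) : c = 0 := by
  rcases Nat.eq_zero_or_pos n with rfl | hn0
  · exact Subsingleton.elim _ _
  have hm : m ≠ 0 := by omega
  let b : Module.Basis (Fin m) (ZMod 2) (GaloisField 2 m) :=
    basisOfLinearIndependentOfCardEqFinrank' _ hξ
      (by rw [Fintype.card_fin, GaloisField.finrank 2 hm])
  have hb : ∀ j, b j = ξ ^ (j : ℕ) := fun j => Module.Basis.mk_apply ..
  set p := ∑ t : Fin n, linearizedPoly m t (c t)
  have hp_basis : ∀ j, p.eval (b j) = 0 := fun j =>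
    eq_zero_of_forall_trace_basis_mul_eq_zero b fun i => by
      have hij := congrFun (congrFun h i) j
      rw [Matrix.sum_apply,
        Finset.sum_congr rfl fun t _ => Pmat_apply (by omega) ξ (c t) i j] at hij
      rw [hb, hb, eval_finsetSum, Finset.mul_sum, map_sum]
      exact hij
  have hp_eval : ∀ y, p.eval y = 0 := congrFun <|
    eq_zero_of_map_add_of_basis b (f := p.eval) (fun y z => by
      simp only [p, eval_finsetSum, eval_linearizedPoly_add, Finset.sum_add_distrib]) hp_basis
  have hp : p = 0 := by
    refine eq_zero_of_natDegree_lt_card_of_eval_eq_zero p Function.injective_id hp_eval ?_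
    rw [Fintype.card_eq_nat_card, GaloisField.card 2 m hm]
    exact (natDegree_sum_le_of_forall_le _ _ fun t _ =>
      natDegree_linearizedPoly_le (by omega) _).trans_lt
        (Nat.pow_lt_pow_right one_lt_two (by omega))
  funext s
  have hs := congrArg (coeff · (2 ^ (s : ℕ))) hp
  simpa [p, finsetSum_coeff, coeff_linearizedPoly_two_pow hn s.2 (Fin.is_lt _), Fin.val_inj]
    using hs

theorem Pmat_sub (ξ : GaloisField 2 m) (t : ℕ) (a b : GaloisField 2 m) :
    Pmat ξ t (a - b) = Pmat ξ t a - Pmat ξ t b := by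
  ext i j
  simp only [Pmat, tr, Matrix.of_apply, Matrix.sub_apply, mul_sub, map_sub]
  split_ifs <;> rfl

theorem Pmat_isSymm (ξ : GaloisField 2 m) (t : ℕ) (a : GaloisField 2 m) : (Pmat ξ t a).IsSymm :=
  Matrix.IsSymm.ext fun i j => by
    simp only [Pmat, Matrix.of_apply]
    split_ifs <;> exact congrArg tr (by ring)

theorem injective_sum_Pmat {n : ℕ} (hn : 2 * n ≤ m + 1) {ξ : GaloisField 2 m}
    (hξ : LinearIndependent (ZMod 2) fun j : Fin m => ξ ^ (j : ℕ)) :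
    Function.Injective fun a : Fin n → GaloisField 2 m => ∑ t : Fin n, Pmat ξ t (a t) :=
  fun a b hab => sub_eq_zero.mp <| eq_zero_of_sum_Pmat_eq_zero hn hξ <| by
    simp only [Pi.sub_apply, Pmat_sub, Finset.sum_sub_distrib, hab, sub_self]

theorem add_one_choose_two_of_odd {m : ℕ} (hm : Odd m) :
    (m + 1).choose 2 = m * ((m + 1) / 2) := by
  obtain ⟨k, rfl⟩ := hm
  rw [Nat.choose_two_right, Nat.add_sub_cancel, show (2 * k + 1 + 1) / 2 = k + 1 by omega,
    show (2 * k + 1 + 1) * (2 * k + 1) = 2 * ((2 * k + 1) * (k + 1)) by ring,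
    Nat.mul_div_cancel_left _ two_pos]

theorem delsarteGoethals_full_level_bijective_onto_symmetric_matrices_general
    (m : ℕ) (hm : Odd m)
    (ξ : GaloisField 2 m)
    (hξ : LinearIndependent (ZMod 2) fun j : Fin m => ξ ^ (j : ℕ)) :
    Function.Injective
        (fun a : Fin ((m + 1) / 2) → GaloisField 2 m =>
          ∑ t : Fin ((m + 1) / 2), Pmat ξ (t : ℕ) (a t)) ∧
      Set.range
          (fun a : Fin ((m + 1) / 2) → GaloisField 2 m =>
            ∑ t : Fin ((m + 1) / 2), Pmat ξ (t : ℕ) (a t)) =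
        {A : Matrix (Fin m) (Fin m) (ZMod 2) | A.IsSymm} := by
  have hinj := injective_sum_Pmat (n := (m + 1) / 2) (by omega) hξ
  refine ⟨hinj, Set.eq_of_subset_of_ncard_le ?_ (le_of_eq ?_) (Set.toFinite _)⟩
  · rintro _ ⟨a, rfl⟩
    exact Finset.sum_induction _ Matrix.IsSymm (fun _ _ => Matrix.IsSymm.add) Matrix.isSymm_zero
      fun t _ => Pmat_isSymm ξ t (a t)
  · rw [← Nat.card_coe_set_eq, ← Nat.card_coe_set_eq, Nat.card_range_of_injective hinj,
      Set.coe_ofPred, card_isSymm, Nat.card_fun, GaloisField.card 2 m hm.pos.ne', Nat.card_zmod,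
      Nat.card_eq_fintype_card (α := Fin _), Fintype.card_fin, Fintype.card_fin, ← pow_mul,
      add_one_choose_two_of_odd hm]

/-- For odd `m` and `r = (m-1)/2`, the map
`(a₀, …, a_r) ↦ ∑_{t=0}^r P^t(a_t)` is a bijection from `F^{(m+1)/2}` onto the set of
all `m × m` binary symmetric matrices; in particular every symmetric `𝔽₂`-bilinear form
on `𝔽₂^m` is represented by exactly one matrix in `DG(m, (m-1)/2)`. -/
theorem delsarteGoethals_full_level_bijective_onto_symmetric_matrices
    (m : ℕ) (hm : Odd m) (hm0 : 0 < m)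
    (ξ : GaloisField 2 m)
    (hξ : LinearIndependent (ZMod 2) fun j : Fin m => ξ ^ (j : ℕ)) :
    Function.Injective
        (fun a : Fin ((m + 1) / 2) → GaloisField 2 m =>
          ∑ t : Fin ((m + 1) / 2), Pmat ξ (t : ℕ) (a t)) ∧
      Set.range
          (fun a : Fin ((m + 1) / 2) → GaloisField 2 m =>
            ∑ t : Fin ((m + 1) / 2), Pmat ξ (t : ℕ) (a t)) =
        {A : Matrix (Fin m) (Fin m) (ZMod 2) | A.IsSymm} :=
  delsarteGoethals_full_level_bijective_onto_symmetric_matrices_general m hm ξ hξ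

end DGPaper
end
end

section
/- Let m be an odd positive integer, F = GF(2^m), N = 2^m, and r ≥ 0. For a tuple a = (a₀,...,a_r) ∈ F^{r+1} write P_a = Σ_{t=0}^r P^t(a_t), and for a binary m-tuple b define the column vector φ_{a,b} ∈ ℂ^N with entries φ_{a,b}(x) = N^{-1/2}·i^{x P_a xᵀ + 2 b xᵀ}, indexed by binary m-tuples x, where the exponent is computed in ℤ₄. Then the N×2^{(r+2)m} matrix Φ with these columns is a tight frame with redundancy 2^{(r+1)m}: Φ Φ† = 2^{(r+1)m}·I_N, i.e. Σ_{a ∈ F^{r+1}} Σ_{b ∈ F₂^m} φ_{a,b}(x)·conj(φ_{a,b}(y)) = 2^{(r+1)m} if x = y and 0 otherwise. Moreover, for each fixed a, the 2^m columns {φ_{a,b} : b ∈ F₂^m} form an orthonormal basis of ℂ^N. -/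
/-!
For fixed `a`, the quadratic phase `i^{x P_a xᵀ}` depends only on the row `x`, while the
dependence on `b` is through the sign character `(-1)^{b·x}` of `𝔽₂^m`. Hence both the Gram
matrix of `{φ_{a,b}}_b` and the matrix `∑_b φ_{a,b} φ_{a,b}†` reduce to the orthogonality
relation `∑_b (-1)^{b·c} = 2^m [c = 0]`, and each is the identity (the phase cancels on
the diagonal). Summing the latter over the `2^{(r+1)m}` tuples `a` gives the tight frame.
-/

noncomputable section

namespace DGPaper

/-- The column `φ_{a,b}` of the Delsarte–Goethals frame: its entry at the binary
`m`-tuple `x` is `2^{-m/2} i^{x P_a xᵀ + 2 b xᵀ}`, where `P_a = ∑_{t=0}^r P^t(a_t)` and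
the exponent is computed in `ℤ₄`. -/
def dgFrameCol {m : ℕ} (ξ : GaloisField 2 m) (r : ℕ)
    (a : Fin (r + 1) → GaloisField 2 m) (b : Fin m → ZMod 2)
    (x : Fin m → ZMod 2) : ℂ :=
  (Real.sqrt (2 ^ m) : ℂ)⁻¹ *
    zeta (qform (∑ t : Fin (r + 1), Pmat ξ (t : ℕ) (a t)) x +
      2 * ∑ j : Fin m, lift2 (b j) * lift2 (x j))

/-- A vector of `ℂ^{𝔽₂^m}` viewed in the euclidean space `EuclideanSpace ℂ (𝔽₂^m)`. -/
def toEuc {m : ℕ} (f : (Fin m → ZMod 2) → ℂ) : EuclideanSpace ℂ (Fin m → ZMod 2) :=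
  (WithLp.equiv 2 ((Fin m → ZMod 2) → ℂ)).symm f

open ComplexConjugate

def zetaChar : AddChar (ZMod 4) ℂ where
  toFun := zeta
  map_zero_eq_one' := by simp [zeta]
  map_add_eq_mul' u v := by
    rw [zeta, zeta, zeta, ← pow_add, ZMod.val_add, ← pow_eq_pow_mod _ Complex.I_pow_four]

-- `lift2` is not additive, but `2 * lift2` is.
def twoMulLift2 : ZMod 2 →+ ZMod 4 where
  toFun s := 2 * lift2 s
  map_zero' := by decide
  map_add' := by decide

def signChar : AddChar (ZMod 2) ℂ := zetaChar.compAddMonoidHom twoMulLift2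

lemma signChar_one : signChar 1 = -1 := by
  change zeta 2 = -1
  simp [zeta, show (2 : ZMod 4).val = 2 from rfl]

lemma lift2_mul (u v : ZMod 2) : lift2 u * lift2 v = lift2 (u * v) := by
  revert u v; decide

lemma two_mul_sum_lift2_mul_lift2 {ι : Type*} [Fintype ι] (b x : ι → ZMod 2) :
    2 * ∑ j, lift2 (b j) * lift2 (x j) = twoMulLift2 (b ⬝ᵥ x) := by
  rw [dotProduct, map_sum, Finset.mul_sum]
  exact Finset.sum_congr rfl fun j _ => by rw [lift2_mul]; rfl

lemma sum_signChar_dotProduct {ι : Type*} [Fintype ι] [DecidableEq ι] (c : ι → ZMod 2) :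
    ∑ b : ι → ZMod 2, signChar (b ⬝ᵥ c) = if c = 0 then (2 : ℂ) ^ Fintype.card ι else 0 := by
  let ψ : AddChar (ι → ZMod 2) ℂ :=
    signChar.compAddMonoidHom (AddMonoidHom.mk' (· ⬝ᵥ c) fun _ _ => add_dotProduct _ _ _)
  have hψ : ψ = 0 ↔ c = 0 := by
    refine ⟨fun h => ?_, fun h => by ext b; simp [ψ, h]⟩
    by_contra hc
    obtain ⟨j, hj⟩ := Function.ne_iff.mp hc
    have hj1 : c j = 1 := (by decide : ∀ s : ZMod 2, s ≠ 0 → s = 1) _ hj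
    have h1 : signChar (c j) = 1 := by
      simpa [ψ] using DFunLike.congr_fun h (Pi.single j 1)
    rw [hj1, signChar_one] at h1
    norm_num at h1
  classical
  simpa [hψ, ψ, Fintype.card_fun] using AddChar.sum_eq_ite ψ

def phaseCol {m : ℕ} (Q : (Fin m → ZMod 2) → ZMod 4) (b x : Fin m → ZMod 2) : ℂ :=
  (Real.sqrt (2 ^ m) : ℂ)⁻¹ * zeta (Q x + 2 * ∑ j : Fin m, lift2 (b j) * lift2 (x j))

lemma inv_sqrt_two_pow_mul_self (m : ℕ) :
    (Real.sqrt (2 ^ m) : ℂ)⁻¹ * (Real.sqrt (2 ^ m) : ℂ)⁻¹ = ((2 : ℂ) ^ m)⁻¹ := by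
  rw [← mul_inv, ← Complex.ofReal_mul, Real.mul_self_sqrt (by positivity)]
  push_cast; rfl

lemma phaseCol_mul_conj {m : ℕ} (Q : (Fin m → ZMod 2) → ZMod 4) (b b' x y : Fin m → ZMod 2) :
    phaseCol Q b x * conj (phaseCol Q b' y) =
      ((2 : ℂ) ^ m)⁻¹ * zetaChar (Q x - Q y) * signChar (b ⬝ᵥ x - b' ⬝ᵥ y) := by
  simp only [phaseCol, two_mul_sum_lift2_mul_lift2, map_mul, map_inv₀, Complex.conj_ofReal]
  rw [mul_mul_mul_comm, inv_sqrt_two_pow_mul_self, mul_assoc]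
  congr 1
  change zetaChar _ * conj (zetaChar _) = zetaChar _ * zetaChar (twoMulLift2 _)
  rw [← AddChar.map_neg_eq_conj, ← AddChar.map_add_eq_mul, ← AddChar.map_add_eq_mul, map_sub]
  congr 1
  abel

lemma sum_phaseCol_mul_conj {m : ℕ} (Q : (Fin m → ZMod 2) → ZMod 4) (x y : Fin m → ZMod 2) :
    ∑ b, phaseCol Q b x * conj (phaseCol Q b y) = if x = y then 1 else 0 := by
  simp_rw [phaseCol_mul_conj, ← dotProduct_sub]
  rw [← Finset.mul_sum, sum_signChar_dotProduct, Fintype.card_fin]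
  by_cases h : x = y
  · simp [h]
  · simp [h, sub_eq_zero]

lemma inner_toEuc_phaseCol {m : ℕ} (Q : (Fin m → ZMod 2) → ZMod 4) (b b' : Fin m → ZMod 2) :
    inner ℂ (toEuc (phaseCol Q b)) (toEuc (phaseCol Q b')) = if b = b' then (1 : ℂ) else 0 := by
  simp_rw [PiLp.inner_apply, RCLike.inner_apply', mul_comm (conj _)]
  change ∑ x, phaseCol Q b' x * conj (phaseCol Q b x) = _
  simp_rw [phaseCol_mul_conj, sub_self, AddChar.map_zero_eq_one, mul_one, dotProduct_comm b',
    dotProduct_comm b, ← dotProduct_sub]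
  rw [← Finset.mul_sum, sum_signChar_dotProduct, Fintype.card_fin]
  by_cases h : b = b'
  · simp [h]
  · simp [h, sub_eq_zero, Ne.symm h]

lemma orthonormal_toEuc_phaseCol {m : ℕ} (Q : (Fin m → ZMod 2) → ZMod 4) :
    Orthonormal ℂ fun b => toEuc (phaseCol Q b) :=
  orthonormal_iff_ite.mpr (inner_toEuc_phaseCol Q)

lemma span_toEuc_phaseCol {m : ℕ} (Q : (Fin m → ZMod 2) → ZMod 4) :
    Submodule.span ℂ (Set.range fun b => toEuc (phaseCol Q b)) = ⊤ :=
  (orthonormal_toEuc_phaseCol Q).linearIndependent.span_eq_top_of_card_eq_finrank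
    (finrank_euclideanSpace).symm

lemma dgFrameCol_eq_phaseCol {m : ℕ} (ξ : GaloisField 2 m) (r : ℕ)
    (a : Fin (r + 1) → GaloisField 2 m) :
    dgFrameCol ξ r a = phaseCol (qform (∑ t : Fin (r + 1), Pmat ξ t (a t))) :=
  rfl

theorem dgFrame_tight_and_union_of_orthonormal_bases_general
    (m r : ℕ) (hm0 : 0 < m)
    (ξ : GaloisField 2 m) :
    (∀ x y : Fin m → ZMod 2,
        (∑ a : Fin (r + 1) → GaloisField 2 m, ∑ b : Fin m → ZMod 2,
            dgFrameCol ξ r a b x * (starRingEnd ℂ) (dgFrameCol ξ r a b y)) =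
          if x = y then (2 : ℂ) ^ ((r + 1) * m) else 0) ∧
      ∀ a : Fin (r + 1) → GaloisField 2 m,
        Orthonormal ℂ (fun b : Fin m → ZMod 2 => toEuc (dgFrameCol ξ r a b)) ∧
          Submodule.span ℂ
              (Set.range fun b : Fin m → ZMod 2 => toEuc (dgFrameCol ξ r a b)) = ⊤ := by
  have hcard : Fintype.card (GaloisField 2 m) = 2 ^ m := by
    rw [← Nat.card_eq_fintype_card, GaloisField.card 2 m hm0.ne']
  refine ⟨fun x y => ?_, fun a => ?_⟩
  · simp_rw [dgFrameCol_eq_phaseCol, sum_phaseCol_mul_conj]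
    split_ifs
    · simp [hcard, pow_mul']
    · simp
  · rw [dgFrameCol_eq_phaseCol]
    exact ⟨orthonormal_toEuc_phaseCol _, span_toEuc_phaseCol _⟩

/-- The Delsarte–Goethals frame, whose `2^{(r+2)m}` columns are the
vectors `φ_{a,b}`, is a tight frame with redundancy `2^{(r+1)m}`:
`∑_{a,b} φ_{a,b}(x) conj(φ_{a,b}(y))` equals `2^{(r+1)m}` if `x = y` and `0` otherwise.
Moreover, for each fixed `a`, the `2^m` columns `{φ_{a,b} : b ∈ 𝔽₂^m}` form an
orthonormal basis of `ℂ^{2^m}`. -/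
theorem dgFrame_tight_and_union_of_orthonormal_bases
    (m r : ℕ) (hm : Odd m) (hm0 : 0 < m)
    (ξ : GaloisField 2 m)
    (hξ : LinearIndependent (ZMod 2) fun j : Fin m => ξ ^ (j : ℕ)) :
    (∀ x y : Fin m → ZMod 2,
        (∑ a : Fin (r + 1) → GaloisField 2 m, ∑ b : Fin m → ZMod 2,
            dgFrameCol ξ r a b x * (starRingEnd ℂ) (dgFrameCol ξ r a b y)) =
          if x = y then (2 : ℂ) ^ ((r + 1) * m) else 0) ∧
      ∀ a : Fin (r + 1) → GaloisField 2 m,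
        Orthonormal ℂ (fun b : Fin m → ZMod 2 => toEuc (dgFrameCol ξ r a b)) ∧
          Submodule.span ℂ
              (Set.range fun b : Fin m → ZMod 2 => toEuc (dgFrameCol ξ r a b)) = ⊤ :=
  dgFrame_tight_and_union_of_orthonormal_bases_general m r hm0 ξ
end DGPaper
end
end

section
/- Let m be a positive integer, F = GF(2^m), and let t ≥ 1. Let x and e be binary m-tuples with e ≠ 0. Then either Σ_{a ∈ F} i^{e P^t(a) (2x+e)ᵀ} = 0, or for every a ∈ F one has (x⊕e) P^t(a) (x⊕e)ᵀ − x P^t(a) xᵀ ≡ 0 (mod 4), where ⊕ denotes bitwise XOR and all quadratic-form expressions are evaluated in ℤ₄ (the vector 2x+e has entries 2x_j + e_j in ℤ₄). -/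
noncomputable section

namespace DGPaper

/-! ### Auxiliary lemmas -/

lemma lift2_zero : lift2 0 = 0 := by decide

lemma zeta_add (u v : ZMod 4) : zeta (u + v) = zeta u * zeta v := by
  have key : ∀ n : ℕ, Complex.I ^ (n % 4) = Complex.I ^ n := by
    intro n
    conv_rhs => rw [← Nat.div_add_mod n 4]
    rw [pow_add, pow_mul, Complex.I_pow_four, one_pow, one_mul]
  unfold zeta
  rw [ZMod.val_add, key, pow_add]

lemma zeta_two : zeta 2 = -1 := by
  show Complex.I ^ (2 : ZMod 4).val = -1
  rw [show (2 : ZMod 4).val = 2 from rfl]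
  exact Complex.I_sq

/-- Splitting a double sum into the strictly-upper-triangular (symmetrized) part
and the diagonal. -/
lemma double_sum_split {M : Type*} [AddCommMonoid M] {m : ℕ} (f : Fin m → Fin m → M) :
    ∑ i, ∑ j, f i j
      = (∑ i : Fin m, ∑ j : Fin m, if i < j then f i j + f j i else 0)
        + ∑ i, f i i := by
  have h1 : ∀ i j : Fin m, f i j =
      (if i < j then f i j else 0) + (if j < i then f i j else 0)
        + (if i = j then f i j else 0) := by
    intro i j
    rcases lt_trichotomy i j with h | h | h
    · simp [h, h.ne, lt_asymm h]
    · simp [h, lt_irrefl]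
    · simp [h, h.ne', lt_asymm h]
  calc ∑ i, ∑ j, f i j
      = ∑ i : Fin m, ∑ j : Fin m,
          ((if i < j then f i j else 0) + (if j < i then f i j else 0)
            + (if i = j then f i j else 0)) :=
        Finset.sum_congr rfl fun i _ => Finset.sum_congr rfl fun j _ => h1 i j
    _ = ((∑ i : Fin m, ∑ j : Fin m, if i < j then f i j else 0)
          + ∑ i : Fin m, ∑ j : Fin m, if j < i then f i j else 0)
          + ∑ i : Fin m, ∑ j : Fin m, if i = j then f i j else 0 := by
        simp [Finset.sum_add_distrib]
    _ = ((∑ i : Fin m, ∑ j : Fin m, if i < j then f i j else 0)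
          + ∑ i : Fin m, ∑ j : Fin m, if i < j then f j i else 0)
          + ∑ i : Fin m, ∑ j : Fin m, if i = j then f i j else 0 := by
        congr 1
        congr 1
        exact Finset.sum_comm
    _ = (∑ i : Fin m, ∑ j : Fin m, if i < j then f i j + f j i else 0)
          + ∑ i, f i i := by
        congr 1
        · rw [← Finset.sum_add_distrib]
          refine Finset.sum_congr rfl fun i _ => ?_
          rw [← Finset.sum_add_distrib]
          refine Finset.sum_congr rfl fun j _ => ?_
          split_ifs with h <;> simp
        · refine Finset.sum_congr rfl fun i _ => ?_
          simp

/-- Two double sums agree if the summands agree after symmetrization and on the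
diagonal. -/
lemma double_sum_eq_of_sym {M : Type*} [AddCommMonoid M] {m : ℕ}
    (f g : Fin m → Fin m → M)
    (hsym : ∀ i j, f i j + f j i = g i j + g j i)
    (hdiag : ∀ i, f i i = g i i) :
    ∑ i, ∑ j, f i j = ∑ i, ∑ j, g i j := by
  rw [double_sum_split f, double_sum_split g]
  congr 1
  · refine Finset.sum_congr rfl fun i _ => Finset.sum_congr rfl fun j _ => ?_
    split_ifs with h
    · exact hsym i j
    · rfl
  · exact Finset.sum_congr rfl fun i _ => hdiag i

lemma Pmat_symm {m : ℕ} (ξ : GaloisField 2 m) (t : ℕ) (a : GaloisField 2 m)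
    (i j : Fin m) : Pmat ξ t a i j = Pmat ξ t a j i := by
  unfold Pmat
  simp only [Matrix.of_apply]
  split_ifs with h
  · congr 1; ring
  · congr 1; ring

lemma Pmat_diag {m : ℕ} (ξ : GaloisField 2 m) {t : ℕ} (htne : t ≠ 0)
    (a : GaloisField 2 m) (i : Fin m) : Pmat ξ t a i i = 0 := by
  unfold Pmat
  simp only [Matrix.of_apply, if_neg htne]
  have h0 : ξ ^ (i : ℕ) * (ξ ^ (i : ℕ)) ^ 2 ^ t + (ξ ^ (i : ℕ)) ^ 2 ^ t * ξ ^ (i : ℕ)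
      = 0 := by
    rw [mul_comm (ξ ^ (i : ℕ))]
    exact CharTwo.add_self_eq_zero _
  rw [h0, zero_mul]
  unfold tr
  exact map_zero _

lemma Pmat_add {m : ℕ} (ξ : GaloisField 2 m) (t : ℕ) (a b : GaloisField 2 m)
    (i j : Fin m) : Pmat ξ t (a + b) i j = Pmat ξ t a i j + Pmat ξ t b i j := by
  unfold Pmat tr
  simp only [Matrix.of_apply]
  split_ifs with h <;> rw [mul_add, map_add]

lemma Pmat_zero {m : ℕ} (ξ : GaloisField 2 m) (t : ℕ) (i j : Fin m) :
    Pmat ξ t 0 i j = 0 := by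
  unfold Pmat tr
  simp only [Matrix.of_apply]
  split_ifs with h <;> rw [mul_zero, map_zero]

lemma key_add : ∀ ei ej xi xj p q : ZMod 2,
    lift2 ei * lift2 (p + q) * (2 * lift2 xj + lift2 ej)
      + lift2 ej * lift2 (p + q) * (2 * lift2 xi + lift2 ei)
    = (lift2 ei * lift2 p * (2 * lift2 xj + lift2 ej)
        + lift2 ei * lift2 q * (2 * lift2 xj + lift2 ej))
      + (lift2 ej * lift2 p * (2 * lift2 xi + lift2 ei)
        + lift2 ej * lift2 q * (2 * lift2 xi + lift2 ei)) := by decide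

lemma key_qf : ∀ xi ei xj ej p : ZMod 2,
    (lift2 (xi + ei) * lift2 p * lift2 (xj + ej) - lift2 xi * lift2 p * lift2 xj)
      + (lift2 (xj + ej) * lift2 p * lift2 (xi + ei) - lift2 xj * lift2 p * lift2 xi)
    = lift2 ei * lift2 p * (2 * lift2 xj + lift2 ej)
      + lift2 ej * lift2 p * (2 * lift2 xi + lift2 ei) := by decide

lemma zmod4_self (v : ZMod 4) (h : v + v = 0) : v = 0 ∨ v = 2 := by
  revert h; revert v; decide

/-- For `t ≥ 1` and binary `m`-tuples `x`, `e` with `e ≠ 0`, either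
the character sum `∑_{a ∈ GF(2^m)} i^{e P^t(a) (2x + e)ᵀ}` vanishes, or
`(x ⊕ e) P^t(a) (x ⊕ e)ᵀ − x P^t(a) xᵀ ≡ 0 (mod 4)` for every `a` (the quadratic forms
being evaluated in `ℤ₄`; note that `⊕` is addition of `𝔽₂`-vectors). -/
theorem dg_charSum_zero_or_row_invariant
    (m t : ℕ) (hm : 0 < m) (ht : 1 ≤ t)
    (ξ : GaloisField 2 m)
    (hξ : LinearIndependent (ZMod 2) fun j : Fin m => ξ ^ (j : ℕ))
    (x e : Fin m → ZMod 2) (he : e ≠ 0) :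
    (∑ a : GaloisField 2 m,
        zeta (∑ i : Fin m, ∑ j : Fin m,
          lift2 (e i) * lift2 (Pmat ξ t a i j) * (2 * lift2 (x j) + lift2 (e j)))) = 0 ∨
      ∀ a : GaloisField 2 m,
        qform (Pmat ξ t a) (x + e) - qform (Pmat ξ t a) x = 0 := by
  have htne : t ≠ 0 := Nat.one_le_iff_ne_zero.mp ht
  set S : GaloisField 2 m → ZMod 4 := fun a =>
    ∑ i : Fin m, ∑ j : Fin m,
      lift2 (e i) * lift2 (Pmat ξ t a i j) * (2 * lift2 (x j) + lift2 (e j)) with hSdef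
  -- S is additive in a
  have hSadd : ∀ a b, S (a + b) = S a + S b := by
    intro a b
    show (∑ i : Fin m, ∑ j : Fin m,
        lift2 (e i) * lift2 (Pmat ξ t (a + b) i j) * (2 * lift2 (x j) + lift2 (e j)))
      = _
    have hrhs : S a + S b = ∑ i : Fin m, ∑ j : Fin m,
        (lift2 (e i) * lift2 (Pmat ξ t a i j) * (2 * lift2 (x j) + lift2 (e j))
          + lift2 (e i) * lift2 (Pmat ξ t b i j) * (2 * lift2 (x j) + lift2 (e j))) := by
      rw [hSdef]
      simp [Finset.sum_add_distrib]
    rw [hrhs]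
    refine double_sum_eq_of_sym _ _ (fun i j => ?_) (fun i => ?_)
    · rw [Pmat_add, Pmat_add,
        Pmat_symm ξ t a j i, Pmat_symm ξ t b j i]
      exact key_add (e i) (e j) (x i) (x j) (Pmat ξ t a i j) (Pmat ξ t b i j)
    · rw [Pmat_add, Pmat_diag ξ htne a, Pmat_diag ξ htne b]
      simp [lift2_zero]
  have hS0 : S 0 = 0 := by
    rw [hSdef]
    simp [Pmat_zero, lift2_zero]
  have hS2 : ∀ a, S a = 0 ∨ S a = 2 := by
    intro a
    apply zmod4_self
    have h := hSadd a a
    rwa [CharTwo.add_self_eq_zero, hS0, eq_comm] at h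
  -- the quadratic form difference equals S
  have hqd : ∀ a : GaloisField 2 m,
      qform (Pmat ξ t a) (x + e) - qform (Pmat ξ t a) x = S a := by
    intro a
    unfold qform
    rw [hSdef, ← Finset.sum_sub_distrib]
    have hlhs : ∀ i : Fin m,
        (∑ j : Fin m, lift2 ((x + e) i) * lift2 (Pmat ξ t a i j) * lift2 ((x + e) j))
          - ∑ j : Fin m, lift2 (x i) * lift2 (Pmat ξ t a i j) * lift2 (x j)
        = ∑ j : Fin m,
            (lift2 ((x + e) i) * lift2 (Pmat ξ t a i j) * lift2 ((x + e) j)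
              - lift2 (x i) * lift2 (Pmat ξ t a i j) * lift2 (x j)) := by
      intro i; rw [Finset.sum_sub_distrib]
    rw [Finset.sum_congr rfl fun i _ => hlhs i]
    refine double_sum_eq_of_sym _ _ (fun i j => ?_) (fun i => ?_)
    · rw [Pmat_symm ξ t a j i]
      simp only [Pi.add_apply]
      exact key_qf (x i) (e i) (x j) (e j) (Pmat ξ t a i j)
    · rw [Pmat_diag ξ htne a]
      simp [lift2_zero]
  by_cases hall : ∀ a, S a = 0
  · right
    intro a
    rw [hqd a, hall a]
  · left
    push_neg at hall
    obtain ⟨a₀, ha₀⟩ := hall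
    have hSa₀ : S a₀ = 2 := (hS2 a₀).resolve_left ha₀
    have hsum : (∑ a : GaloisField 2 m, zeta (S a))
        = - ∑ a : GaloisField 2 m, zeta (S a) := by
      have hre : (∑ a : GaloisField 2 m, zeta (S (a₀ + a)))
          = ∑ a : GaloisField 2 m, zeta (S a) :=
        Fintype.sum_equiv (Equiv.addLeft a₀)
          (fun a => zeta (S (a₀ + a))) (fun a => zeta (S a)) (fun a => rfl)
      rw [← hre]
      calc (∑ a : GaloisField 2 m, zeta (S (a₀ + a)))
          = ∑ a : GaloisField 2 m, zeta (S a₀) * zeta (S a) := by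
            refine Finset.sum_congr rfl fun a _ => ?_
            rw [hSadd, zeta_add]
        _ = - ∑ a : GaloisField 2 m, zeta (S (a₀ + a)) := by
            rw [← Finset.mul_sum, hSa₀, zeta_two, neg_one_mul, hre]
    have h0 : (∑ a : GaloisField 2 m, zeta (S a))
        + ∑ a : GaloisField 2 m, zeta (S a) = 0 :=
      eq_neg_iff_add_eq_zero.mp hsum
    have h2 : (2 : ℂ) * ∑ a : GaloisField 2 m, zeta (S a) = 0 := by
      rw [two_mul]; exact h0
    rcases mul_eq_zero.mp h2 with h | h
    · exact absurd h two_ne_zero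
    · exact h
end DGPaper
end
end

section
/- Let m be an odd positive integer, F = GF(2^m), and let a ∈ F be nonzero. Then the set {x ∈ F : Tr(a·(x·y² + x²·y)) = 0 for all y ∈ F} equals {0, c}, where c is the unique element of F with c³ = a⁻¹ (the cube map being a bijection on F since m is odd). -/
noncomputable section

namespace DGPaper

/-!
Write `Tr` for the trace to `𝔽₂`, so that `Tr (u ^ 2) = Tr u`. For `a, x ≠ 0` let `w ^ 2 = a x`;
then `Tr (a x y ^ 2) = Tr (w y)`, so `x` lies in the radical iff `w + a x ^ 2` is trace-orthogonal
to everything, i.e. `w = a x ^ 2`, i.e. `a x ^ 3 = 1`. Conversely, if `a x ^ 3 = 1` then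
`a (x y ^ 2 + x ^ 2 y) = u ^ 2 + u` with `u = a x ^ 2 y`, whose trace vanishes. For odd `m`,
`3 ∤ 2 ^ m - 1`, so cubing is a bijection of `GF(2^m)` and `a x ^ 3 = 1` has exactly one root.
-/

open Function

section Trace

variable {K L : Type*} [Field K] [Fintype K] [Field L] [Algebra K L]

theorem trace_pow_card [Algebra.IsAlgebraic K L] (x : L) :
    Algebra.trace K L (x ^ Fintype.card K) = Algebra.trace K L x :=
  Algebra.trace_eq_of_algEquiv (FiniteField.frobeniusAlgEquivOfAlgebraic K L) x

theorem eq_zero_of_forall_trace_mul_eq_zero [Finite L] {u : L}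
    (h : ∀ y, Algebra.trace K L (u * y) = 0) : u = 0 :=
  (traceForm_nondegenerate K L).1 u h

end Trace

theorem pow_bijective_of_coprime_card_sub_one {F : Type*} [Field F] [Finite F] {n : ℕ}
    (hn : n ≠ 0) (hcop : (Nat.card F - 1).Coprime n) : Bijective (· ^ n : F → F) := by
  rw [← Nat.card_units] at hcop
  refine Finite.injective_iff_bijective.1 fun x y hxy => ?_
  rcases eq_or_ne x 0 with rfl | hx
  · exact ((pow_eq_zero_iff hn).1 (hxy.symm.trans (zero_pow hn))).symm
  have hy : y ≠ 0 := by rintro rfl; exact hx ((pow_eq_zero_iff hn).1 (hxy.trans (zero_pow hn)))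
  have := hcop.pow_left_bijective.injective (a₁ := Units.mk0 x hx) (a₂ := Units.mk0 y hy)
    (Units.ext (by simpa using hxy))
  simpa using congrArg Units.val this

theorem coprime_two_pow_sub_one_three {m : ℕ} (hm : Odd m) : (2 ^ m - 1).Coprime 3 := by
  obtain ⟨k, rfl⟩ := hm
  have : 2 ^ (2 * k + 1) % 3 = 2 := by
    rw [pow_succ, pow_mul, Nat.mul_mod, Nat.pow_mod]; norm_num
  rw [Nat.coprime_comm, Nat.Prime.coprime_iff_not_dvd Nat.prime_three]
  generalize 2 ^ (2 * k + 1) = x at *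
  omega

section BinaryExtension

variable {L : Type*} [Field L] [Finite L] [Algebra (ZMod 2) L]

local notation "Tr" => Algebra.trace (ZMod 2) L

theorem trace_sq (u : L) : Tr (u ^ 2) = Tr u := by
  simpa [ZMod.card] using trace_pow_card (K := ZMod 2) u

theorem exists_sq_eq (u : L) : ∃ w : L, w ^ 2 = u := by
  obtain ⟨w, hw⟩ := (FiniteField.frobeniusAlgEquivOfAlgebraic (ZMod 2) L).surjective u
  exact ⟨w, by simpa [ZMod.card] using hw⟩

theorem forall_trace_cross_form_eq_zero_iff {a x : L} (ha : a ≠ 0) (hx : x ≠ 0) :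
    (∀ y, Tr (a * (x * y ^ 2 + x ^ 2 * y)) = 0) ↔ a * x ^ 3 = 1 := by
  constructor
  · intro h
    obtain ⟨w, hw⟩ := exists_sq_eq (a * x)
    have hperp : ∀ y, Tr ((w + a * x ^ 2) * y) = 0 := fun y => by
      rw [← h y, add_mul, map_add, ← trace_sq (w * y), ← map_add]
      congr 1
      linear_combination y ^ 2 * hw
    have hw0 : w + a * x ^ 2 = 0 := eq_zero_of_forall_trace_mul_eq_zero hperp
    have : a * x * (a * x ^ 3 - 1) = 0 := by linear_combination (a * x ^ 2 - w) * hw0 + hw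
    exact sub_eq_zero.1 ((mul_eq_zero.1 this).resolve_left (mul_ne_zero ha hx))
  · intro hax y
    have : a * (x * y ^ 2 + x ^ 2 * y) = (a * x ^ 2 * y) ^ 2 + a * x ^ 2 * y := by
      linear_combination (-(a * x * y ^ 2)) * hax
    rw [this, map_add, trace_sq, CharTwo.add_self_eq_zero]

end BinaryExtension

/-- For odd `m` and nonzero `a ∈ GF(2^m)`, the radical
`{x : Tr(a (x y² + x² y)) = 0 for all y}` of the bilinear form represented by `P¹(a)`
equals `{0, c}`, where `c` is the unique element with `c³ = a⁻¹` (the cube map being a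
bijection since `m` is odd). -/
theorem radical_of_P1_form_eq_pair
    (m : ℕ) (hm : Odd m) (a : GaloisField 2 m) (ha : a ≠ 0) :
    (∃! c : GaloisField 2 m, c ^ 3 = a⁻¹) ∧
      ∀ c : GaloisField 2 m, c ^ 3 = a⁻¹ →
        {x : GaloisField 2 m |
            ∀ y : GaloisField 2 m, tr (a * (x * y ^ 2 + x ^ 2 * y)) = 0} =
          {0, c} := by
  have hcard : Nat.card (GaloisField 2 m) - 1 = 2 ^ m - 1 := by
    rw [GaloisField.card 2 m hm.pos.ne']
  have hcube : Bijective (· ^ 3 : GaloisField 2 m → GaloisField 2 m) :=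
    pow_bijective_of_coprime_card_sub_one three_ne_zero (hcard ▸ coprime_two_pow_sub_one_three hm)
  refine ⟨hcube.existsUnique a⁻¹, fun c hc => Set.ext fun x => ?_⟩
  rcases eq_or_ne x 0 with rfl | hx
  · simp [tr]
  · have hcube_eq : x ^ 3 = a⁻¹ ↔ x = c := hc ▸ hcube.injective.eq_iff
    rw [Set.mem_ofPred_eq, Set.mem_insert_iff, Set.mem_singleton_iff, or_iff_right hx,
      ← hcube_eq, ← mul_eq_one_iff_eq_inv₀ ha, mul_comm, ← forall_trace_cross_form_eq_zero_iff ha hx]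
    rfl
end DGPaper
end
end
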